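/- (Lemma 3.1, first part: Jacobian of an exponential integrator) Suppose that at a point y ∈ ℝ^n the matrix I_{sn} − h·Ā·F(y) is invertible. Then the Jacobian matrix of φ at y equals exp(h·K) + h·W(y)·(I_{sn} − h·Ā·F(y))^{−1}·C. -/

import Mathlib

/-!
Differentiating the stage equations shows that the stage Jacobians `J i = Dk_i(y)` solve the
linear system `J i = exp(c_i h K) + h ∑ j, Ā_ij Dg(k_j y) J j`, which for the stacked column
`J` reads `(1 - h Ā F(y)) J = C`; hence `J = (1 - h Ā F(y))⁻¹ C`. Differentiating `φ` gives
`exp(h K) + h ∑ i, B̄_i Dg(k_i y) J i = exp(h K) + h W(y) J`.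
-/

open Matrix

/-- The Jacobian matrix of a map `f : ℝ^ι → ℝ^ι` at a point `y`. -/
noncomputable def jac {ι : Type*} [Fintype ι] [DecidableEq ι]
    (f : (ι → ℝ) → (ι → ℝ)) (y : ι → ℝ) : Matrix ι ι ℝ :=
  LinearMap.toMatrix' ((fderiv ℝ f y).toLinearMap)

namespace Matrix

variable {σ ι κ μ α : Type*}

def blockCol (J : σ → Matrix ι κ α) : Matrix (σ × ι) κ α :=
  of fun p b => J p.1 p.2 b

@[simp]
theorem blockCol_apply (J : σ → Matrix ι κ α) (p : σ × ι) (b : κ) :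
    blockCol J p b = J p.1 p.2 b := rfl

variable [Fintype σ] [Fintype ι] [NonUnitalNonAssocSemiring α]

theorem mul_blockCol_of_blocks {τ : Type*} {M : Matrix (τ × μ) (σ × ι) α}
    {A : τ → σ → Matrix μ ι α} (hM : ∀ p q, M p q = A p.1 q.1 p.2 q.2)
    (J : σ → Matrix ι κ α) :
    M * blockCol J = blockCol fun i => ∑ j, A i j * J j := by
  ext p b
  simp [mul_apply, Fintype.sum_prod_type, hM, sum_apply]

theorem mul_blockCol_of_blockDiagonal [DecidableEq σ] {M : Matrix (σ × ι) (σ × ι) α}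
    {G : σ → Matrix ι ι α} (hM : ∀ p q, M p q = if p.1 = q.1 then G p.1 p.2 q.2 else 0)
    (J : σ → Matrix ι κ α) :
    M * blockCol J = blockCol fun j => G j * J j := by
  rw [mul_blockCol_of_blocks (A := fun i j => if i = j then G i else 0)]
  · congr! with i
    rw [Finset.sum_eq_single i] <;> simp_all [eq_comm]
  · intro p q
    simp only [hM]
    split_ifs <;> simp_all

theorem mul_blockCol_of_blockRow {M : Matrix μ (σ × ι) α} {B : σ → Matrix μ ι α}
    (hM : ∀ a q, M a q = B q.1 a q.2) (J : σ → Matrix ι κ α) :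
    M * blockCol J = ∑ i, B i * J i := by
  ext a b
  simp [mul_apply, Fintype.sum_prod_type, hM, sum_apply]

end Matrix

theorem jac_eq_of_eq_mulVec_add_smul_sum {ι σ : Type*} [Fintype ι] [DecidableEq ι] [Fintype σ]
    (E : Matrix ι ι ℝ) (h : ℝ) (A : σ → Matrix ι ι ℝ) {g : (ι → ℝ) → ι → ℝ}
    {k : σ → (ι → ℝ) → ι → ℝ} {f : (ι → ℝ) → ι → ℝ} {y : ι → ℝ}
    (hg : ∀ j, DifferentiableAt ℝ g (k j y)) (hk : ∀ j, DifferentiableAt ℝ (k j) y)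
    (hf : ∀ z, f z = E *ᵥ z + h • ∑ j, A j *ᵥ g (k j z)) :
    jac f y = E + h • ∑ j, A j * jac g (k j y) * jac (k j) y := by
  let L (M : Matrix ι ι ℝ) : (ι → ℝ) →L[ℝ] ι → ℝ :=
    LinearMap.toContinuousLinearMap (toLin' M)
  have hderiv : HasFDerivAt f
      (L E + h • ∑ j, (L (A j)).comp ((fderiv ℝ g (k j y)).comp (fderiv ℝ (k j) y))) y := by
    rw [funext hf]
    refine (L E).hasFDerivAt.add (.const_smul (.fun_sum fun j _ => ?_) h)
    exact (L (A j)).hasFDerivAt.comp y ((hg j).hasFDerivAt.comp y (hk j).hasFDerivAt)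
  simp [jac, hderiv.fderiv, L, LinearMap.toMatrix'_comp, mul_assoc]

theorem stmt_0 (n s : ℕ) (h : ℝ) (K : Matrix (Fin n) (Fin n) ℝ) (c : Fin s → ℝ)
    (g : (Fin n → ℝ) → (Fin n → ℝ)) (hg : Differentiable ℝ g)
    (Abar : Fin s → Fin s → Matrix (Fin n) (Fin n) ℝ)
    (Bbar : Fin s → Matrix (Fin n) (Fin n) ℝ)
    (k : Fin s → (Fin n → ℝ) → (Fin n → ℝ))
    (hk : ∀ i, Differentiable ℝ (k i))
    (hkdef : ∀ i y, k i y =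
      (NormedSpace.exp ((c i * h) • K)).mulVec y +
        h • ∑ j, (Abar i j).mulVec (g (k j y)))
    (φ : (Fin n → ℝ) → (Fin n → ℝ))
    (hφ : ∀ y, φ y =
      (NormedSpace.exp (h • K)).mulVec y + h • ∑ i, (Bbar i).mulVec (g (k i y)))
    -- the big block matrices
    (F : (Fin n → ℝ) → Matrix (Fin s × Fin n) (Fin s × Fin n) ℝ)
    (hF : ∀ y p q, F y p q = if p.1 = q.1 then jac g (k p.1 y) p.2 q.2 else 0)
    (Ablk : Matrix (Fin s × Fin n) (Fin s × Fin n) ℝ)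
    (hAblk : ∀ p q, Ablk p q = Abar p.1 q.1 p.2 q.2)
    (W : (Fin n → ℝ) → Matrix (Fin n) (Fin s × Fin n) ℝ)
    (hW : ∀ y a q, W y a q = (Bbar q.1 * jac g (k q.1 y)) a q.2)
    (C : Matrix (Fin s × Fin n) (Fin n) ℝ)
    (hC : ∀ p b, C p b = NormedSpace.exp ((c p.1 * h) • K) p.2 b)
    (y : Fin n → ℝ)
    (hinv : IsUnit ((1 : Matrix (Fin s × Fin n) (Fin s × Fin n) ℝ) - h • (Ablk * F y))) :
    jac φ y = NormedSpace.exp (h • K) +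
      h • (W y * ((1 : Matrix (Fin s × Fin n) (Fin s × Fin n) ℝ) - h • (Ablk * F y))⁻¹ * C) := by
  set G := fun j => jac g (k j y)
  set J := fun j => jac (k j) y
  have hstage :
      ∀ i, J i = NormedSpace.exp ((c i * h) • K) + h • ∑ j, Abar i j * G j * J j :=
    fun i => jac_eq_of_eq_mulVec_add_smul_sum _ h (Abar i) (fun _ => hg _) (fun j => hk j y)
      (hkdef i)
  have hC' : C = blockCol fun i => NormedSpace.exp ((c i * h) • K) := Matrix.ext hC
  have hAF : Ablk * F y * blockCol J = blockCol fun i => ∑ j, Abar i j * G j * J j := by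
    rw [Matrix.mul_assoc, mul_blockCol_of_blockDiagonal (G := G) (hF y),
      mul_blockCol_of_blocks hAblk]
    simp only [Matrix.mul_assoc]
  have hsolve : (1 - h • (Ablk * F y)) * blockCol J = C := by
    rw [Matrix.sub_mul, Matrix.one_mul, Matrix.smul_mul, hAF, hC']
    ext p b
    simp [hstage p.1]
  rw [jac_eq_of_eq_mulVec_add_smul_sum _ h Bbar (fun _ => hg _) (fun i => hk i y) hφ,
    Matrix.mul_assoc, ← hsolve,
    Matrix.nonsing_inv_mul_cancel_left _ _ ((isUnit_iff_isUnit_det _).mp hinv),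
    mul_blockCol_of_blockRow (B := fun i => Bbar i * G i) (hW y)]
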